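/- arXiv:2104.14940 — 7 statements merged into one kernel-verified Lean document; each statement's English description precedes it below -/
import Mathlib

section
/- Let a_1, ..., a_d be real numbers with sum zero, and let k ≤ d/3 be a positive integer. Then there exists a subset S of {1,...,d} with |S| = k such that |∑_{n∈S} a_n| ≥ (k/d)·∑_{n=1}^d |a_n|. -/
open Finset

lemma avg_subset {ι : Type*} [DecidableEq ι] (k : ℕ) :
    ∀ (s : Finset ι) (f : ι → ℝ), k ≤ s.card →
    ∃ t ⊆ s, t.card = k ∧ (k : ℝ) * ∑ i ∈ s, f i ≤ (s.card : ℝ) * ∑ i ∈ t, f i := by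
  induction k with
  | zero => intro s f _; exact ⟨∅, empty_subset _, rfl, by simp⟩
  | succ k ih =>
    intro s f h
    have hs : s.Nonempty := card_pos.mp (lt_of_lt_of_le (Nat.succ_pos k) h)
    obtain ⟨i, hi, hx⟩ : ∃ i ∈ s, ∑ j ∈ s, f j ≤ (s.card : ℝ) * f i := by
      apply Finset.exists_le_of_sum_le hs
      rw [Finset.sum_const, ← Finset.mul_sum]
      simp [mul_comm]
    have hce : (s.erase i).card = s.card - 1 := card_erase_of_mem hi
    obtain ⟨t, hts, htc, hineq⟩ := ih (s.erase i) f (by omega)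
    have hit : i ∉ t := fun hmem => (Finset.mem_erase.mp (hts hmem)).1 rfl
    refine ⟨insert i t, ?_, ?_, ?_⟩
    · intro x hx'
      rcases Finset.mem_insert.mp hx' with rfl | hx'
      · exact hi
      · exact (Finset.erase_subset _ _) (hts hx')
    · rw [Finset.card_insert_of_notMem hit, htc]
    · rw [Finset.sum_insert hit]
      have hsum : ∑ j ∈ s.erase i, f j = ∑ j ∈ s, f j - f i := by
        rw [← Finset.add_sum_erase s f hi]; ring
      rw [hce, hsum] at hineq
      have hn1 : 1 ≤ s.card := hs.card_pos
      have hcast : ((s.card - 1 : ℕ) : ℝ) = (s.card : ℝ) - 1 := by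
        push_cast [hn1]; ring
      rw [hcast] at hineq
      have hkn : (k : ℝ) + 1 ≤ (s.card : ℝ) := by exact_mod_cast h
      by_cases h1 : s.card = 1
      · have hk0 : k = 0 := by omega
        have ht0 : t = ∅ := Finset.card_eq_zero.mp (by omega)
        subst ht0 hk0
        simp only [h1] at hx ⊢
        push_cast at hx ⊢
        simpa using hx
      · have h2 : (2 : ℝ) ≤ (s.card : ℝ) := by
          have : 2 ≤ s.card := by omega
          exact_mod_cast this
        have hd1 : (0:ℝ) < (s.card : ℝ) - 1 := by linarith
        have key : ((s.card:ℝ)-1) * (((k:ℝ)+1) * ∑ j ∈ s, f j) ≤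
            ((s.card:ℝ)-1) * ((s.card:ℝ) * (f i + ∑ x ∈ t, f x)) := by
          nlinarith [mul_le_mul_of_nonneg_left hx (show (0:ℝ) ≤ (s.card : ℝ) - 1 - k by linarith),
            mul_le_mul_of_nonneg_left hineq (show (0:ℝ) ≤ (s.card : ℝ) by linarith)]
        have := le_of_mul_le_mul_left key hd1
        push_cast
        linarith

lemma aux_main (d k : ℕ) (hk : 0 < k) (h3 : 3 * k ≤ d)
    (a : Fin d → ℝ) (hsum : ∑ n, a n = 0)
    (h2 : 2 * (Finset.univ.filter (fun i => 0 < a i)).card ≤ d) :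
    ∃ S : Finset (Fin d), S.card = k ∧
      (k : ℝ) / d * ∑ n, |a n| ≤ |∑ n ∈ S, a n| := by
  classical
  set pos : Finset (Fin d) := Finset.univ.filter (fun i => 0 < a i) with hpos
  set p := pos.card with hp
  set P := ∑ i ∈ pos, a i with hP
  have hd0 : 0 < d := by omega
  have hPnn : 0 ≤ P := Finset.sum_nonneg (fun i hi => le_of_lt (Finset.mem_filter.mp hi).2)
  have hcompl : ∑ i ∈ posᶜ, a i = -P := by
    have := Finset.sum_compl_add_sum pos a
    rw [hsum] at this
    linarith [this]
  have habs : ∑ n, |a n| = 2 * P := by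
    rw [← Finset.sum_compl_add_sum pos (fun n => |a n|)]
    have he1 : ∑ i ∈ pos, |a i| = P := by
      apply Finset.sum_congr rfl
      intro i hi
      exact abs_of_pos (Finset.mem_filter.mp hi).2
    have he2 : ∑ i ∈ posᶜ, |a i| = P := by
      have : ∑ i ∈ posᶜ, |a i| = ∑ i ∈ posᶜ, (-a i) := by
        apply Finset.sum_congr rfl
        intro i hi
        have : ¬ (0 < a i) := by
          simpa [hpos] using (Finset.mem_compl.mp hi)
        exact abs_of_nonpos (by linarith)
      rw [this, Finset.sum_neg_distrib, hcompl]; ring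
    rw [he1, he2]; ring
  have hcardcompl : posᶜ.card = d - p := by
    rw [Finset.card_compl]; simp [hp]
  by_cases hkp : k ≤ p
  · obtain ⟨t, hts, htc, hineq⟩ := avg_subset k pos a hkp
    have htsum : ∑ i ∈ t, a i = ∑ i ∈ t, a i := rfl
    have hp0 : 0 < p := lt_of_lt_of_le hk hkp
    have hSnn : 0 ≤ ∑ i ∈ t, a i := by
      have hkP : 0 ≤ (k : ℝ) * P := by positivity
      nlinarith [hineq, show (0:ℝ) < p by exact_mod_cast hp0]
    refine ⟨t, htc, ?_⟩
    rw [abs_of_nonneg hSnn, habs]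
    rw [div_mul_eq_mul_div, div_le_iff₀ (by exact_mod_cast hd0)]
    have h2p : (2 : ℝ) * p ≤ d := by exact_mod_cast h2
    nlinarith [hineq]
  · push_neg at hkp
    have hpk : p ≤ k := le_of_lt hkp
    have hkd : k ≤ d := by omega
    have hple : p ≤ d := by
      calc p ≤ k := hpk
        _ ≤ d := hkd
    obtain ⟨t, hts, htc, hineq⟩ := avg_subset (k - p) posᶜ a (by omega)
    have hdisj : Disjoint pos t := by
      rw [Finset.disjoint_right]
      intro x hx
      exact Finset.mem_compl.mp (hts hx)
    refine ⟨pos ∪ t, ?_, ?_⟩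
    · rw [Finset.card_union_of_disjoint hdisj, htc]; omega
    · rw [Finset.sum_union hdisj, habs]
      set St := ∑ i ∈ t, a i with hSt
      rw [hcompl, hcardcompl] at hineq
      have hc1 : ((k - p : ℕ) : ℝ) = (k : ℝ) - p := by push_cast [hpk]; ring
      have hc2 : ((d - p : ℕ) : ℝ) = (d : ℝ) - p := by push_cast [hple]; ring
      rw [hc1, hc2] at hineq
      have hdp : (0 : ℝ) < (d : ℝ) - p := by
        have : p < d := by omega
        have h1 : (p : ℝ) < d := by exact_mod_cast this
        linarith
      have h3r : 3 * (k : ℝ) ≤ d := by exact_mod_cast h3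
      have hkr : (0 : ℝ) < k := by exact_mod_cast hk
      have hpr : (0 : ℝ) ≤ p := by positivity
      have hSnn : 0 ≤ P + St := by nlinarith [hineq]
      rw [abs_of_nonneg hSnn]
      rw [div_mul_eq_mul_div, div_le_iff₀ (by exact_mod_cast hd0)]
      -- want k * (2P) ≤ (P + St) * d
      nlinarith [mul_le_mul_of_nonneg_left hineq (show (0:ℝ) ≤ d by positivity),
        mul_nonneg hPnn (show (0:ℝ) ≤ (d:ℝ) * (d - 3*k) + 2*k*p by nlinarith)]

theorem subset_sum_lower_bound (d k : ℕ) (hk : 0 < k) (h3 : 3 * k ≤ d)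
    (a : Fin d → ℝ) (hsum : ∑ n, a n = 0) :
    ∃ S : Finset (Fin d), S.card = k ∧
      (k : ℝ) / d * ∑ n, |a n| ≤ |∑ n ∈ S, a n| := by
  classical
  by_cases hcase : 2 * (Finset.univ.filter (fun i => 0 < a i)).card ≤ d
  · exact aux_main d k hk h3 a hsum hcase
  · have hneg : ∑ n, (-a) n = 0 := by simp [hsum]
    have hcard : 2 * (Finset.univ.filter (fun i => 0 < (-a) i)).card ≤ d := by
      have hdisj : Disjoint (Finset.univ.filter (fun i => 0 < a i))
          (Finset.univ.filter (fun i => 0 < (-a) i)) := by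
        rw [Finset.disjoint_filter]
        intro x _ hx
        simp only [Pi.neg_apply]
        linarith
      have := Finset.card_union_of_disjoint hdisj
      have hle := Finset.card_le_univ ((Finset.univ.filter (fun i => 0 < a i)) ∪
        (Finset.univ.filter (fun i => 0 < (-a) i)))
      simp only [Finset.card_univ, Fintype.card_fin] at hle
      omega
    obtain ⟨S, hSc, hSb⟩ := aux_main d k hk h3 (-a) hneg hcard
    refine ⟨S, hSc, ?_⟩
    simp only [Pi.neg_apply, abs_neg, ← Finset.sum_neg_distrib] at hSb
    simpa [abs_neg] using hSb
end

section
/- Let ρ_1,...,ρ_d be density matrices on ℂ^N, Ω = (1/d)∑_n ρ_n, and ω = ∑_n p_n ρ_n for a probability distribution p. For any POVM M = {M_r}, the distinguishability D_M(ω,Ω) := (1/2)∑_r |Tr(M_r(ω-Ω))| satisfies D_M(ω,Ω) ≤ √((1/d)∑_n D_M(ρ_n,Ω)²)·√(d·∑_n p_n² - 1). -/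
open ComplexOrder

open Matrix in
/-- Distinguishability of `ρ` and `σ` with respect to the POVM `M`. -/
noncomputable def povmDist {N r : ℕ} (M : Fin r → Matrix (Fin N) (Fin N) ℂ)
    (ρ σ : Matrix (Fin N) (Fin N) ℂ) : ℝ :=
  (1 / 2) * ∑ i, ‖(M i * (ρ - σ)).trace‖

open Matrix in
/-- Theorem 1: the distinguishability of a time-averaged state from the
microcanonical state is bounded via the RMS eigenstate distinguishability
and the effective dimension. -/
theorem timeAverage_thermalisation_bound {N r d : ℕ} (hd : 0 < d)
    (M : Fin r → Matrix (Fin N) (Fin N) ℂ)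
    (hM : ∀ i, (M i).PosSemidef) (hMsum : ∑ i, M i = 1)
    (ρ : Fin d → Matrix (Fin N) (Fin N) ℂ)
    (hρ : ∀ n, (ρ n).PosSemidef) (hρ1 : ∀ n, (ρ n).trace = 1)
    (p : Fin d → ℝ) (hp : ∀ n, 0 ≤ p n) (hp1 : ∑ n, p n = 1) :
    povmDist M (∑ n, (p n : ℂ) • ρ n) ((1 / (d : ℂ)) • ∑ n, ρ n)
      ≤ Real.sqrt ((1 / d) * ∑ n,
            (povmDist M (ρ n) ((1 / (d : ℂ)) • ∑ m, ρ m)) ^ 2)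
        * Real.sqrt (d * (∑ n, (p n) ^ 2) - 1) := by
  have hdR : (d : ℝ) ≠ 0 := Nat.cast_ne_zero.mpr hd.ne'
  have hdC : (d : ℂ) ≠ 0 := Nat.cast_ne_zero.mpr hd.ne'
  set Ω : Matrix (Fin N) (Fin N) ℂ := (1 / (d : ℂ)) • ∑ m, ρ m with hΩ
  set D : Fin d → ℝ := fun n => povmDist M (ρ n) Ω with hDdef
  set c : Fin d → ℝ := fun n => |p n - 1 / (d : ℝ)| with hcdef
  have hDnonneg : ∀ n, 0 ≤ D n := fun n => by
    apply mul_nonneg (by norm_num)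
    exact Finset.sum_nonneg fun i _ => norm_nonneg _
  have hcnonneg : ∀ n, 0 ≤ c n := fun n => abs_nonneg _
  -- sum of coefficients vanishes
  have hsumc : ∑ n : Fin d, ((p n : ℂ) - 1 / (d : ℂ)) = 0 := by
    rw [Finset.sum_sub_distrib]
    have h1 : ∑ n : Fin d, (p n : ℂ) = 1 := by
      rw [← Complex.ofReal_sum, hp1, Complex.ofReal_one]
    have h2 : ∑ _n : Fin d, (1 / (d : ℂ)) = 1 := by
      rw [Finset.sum_const, Finset.card_univ, Fintype.card_fin, nsmul_eq_mul]
      field_simp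
    rw [h1, h2, sub_self]
  -- key decomposition
  have key : (∑ n, (p n : ℂ) • ρ n) - Ω
      = ∑ n, ((p n : ℂ) - 1 / (d : ℂ)) • (ρ n - Ω) := by
    have h1 : ∑ n, ((p n : ℂ) - 1 / (d : ℂ)) • (ρ n - Ω)
        = (∑ n, ((p n : ℂ) - 1 / (d : ℂ)) • ρ n)
          - (∑ n : Fin d, ((p n : ℂ) - 1 / (d : ℂ))) • Ω := by
      rw [Finset.sum_smul, ← Finset.sum_sub_distrib]
      congr 1; funext n; rw [smul_sub]
    rw [h1, hsumc, zero_smul, sub_zero, hΩ, Finset.smul_sum, ← Finset.sum_sub_distrib]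
    congr 1; funext n; rw [sub_smul]
  -- step 1 : triangle inequality
  have step1 : povmDist M (∑ n, (p n : ℂ) • ρ n) Ω ≤ ∑ n, c n * D n := by
    unfold povmDist
    have htr : ∀ i, (M i * ((∑ n, (p n : ℂ) • ρ n) - Ω)).trace
        = ∑ n, ((p n : ℂ) - 1 / (d : ℂ)) * (M i * (ρ n - Ω)).trace := by
      intro i
      rw [key, Finset.mul_sum, trace_sum]
      congr 1; funext n
      rw [Matrix.mul_smul, trace_smul, smul_eq_mul]
    calc (1 / 2 : ℝ) * ∑ i, ‖(M i * ((∑ n, (p n : ℂ) • ρ n) - Ω)).trace‖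
        ≤ (1 / 2 : ℝ) * ∑ i, ∑ n, c n * ‖(M i * (ρ n - Ω)).trace‖ := by
          apply mul_le_mul_of_nonneg_left _ (by norm_num)
          apply Finset.sum_le_sum
          intro i _
          rw [htr i]
          refine le_trans (norm_sum_le _ _)
            (le_of_eq (Finset.sum_congr rfl fun n _ => ?_))
          rw [norm_mul]
          congr 1
          have hcast : (p n : ℂ) - 1 / (d : ℂ) = ((p n - 1 / (d : ℝ) : ℝ) : ℂ) := by
            push_cast; ring
          rw [hcast, Complex.norm_real, Real.norm_eq_abs]
      _ = ∑ n, c n * D n := by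
          simp only [Finset.mul_sum]
          rw [Finset.sum_comm]
          refine Finset.sum_congr rfl fun n _ => ?_
          rw [hDdef]
          unfold povmDist
          simp only [Finset.mul_sum]
          exact Finset.sum_congr rfl fun i _ => by ring
  -- Cauchy–Schwarz
  have step2 : ∑ n, c n * D n ≤ Real.sqrt ((∑ n, c n ^ 2) * ∑ n, D n ^ 2) := by
    rw [Real.le_sqrt (Finset.sum_nonneg fun n _ => mul_nonneg (hcnonneg n) (hDnonneg n))]
    · exact Finset.sum_mul_sq_le_sq_mul_sq Finset.univ c D
    · positivity
  -- identify the right-hand side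
  have hc2 : ∑ n, c n ^ 2 = (∑ n, p n ^ 2) - 1 / (d : ℝ) := by
    have h : ∀ n, c n ^ 2 = p n ^ 2 - (2 / (d : ℝ)) * p n + 1 / (d : ℝ) ^ 2 := by
      intro n; rw [hcdef]; simp only [sq_abs]; field_simp; ring
    rw [Finset.sum_congr rfl fun n _ => h n, Finset.sum_add_distrib,
      Finset.sum_sub_distrib, ← Finset.mul_sum, hp1, Finset.sum_const,
      Finset.card_univ, Fintype.card_fin, nsmul_eq_mul]
    field_simp; ring
  have hrhs : Real.sqrt ((1 / (d : ℝ)) * ∑ n, D n ^ 2) * Real.sqrt ((d : ℝ) * (∑ n, p n ^ 2) - 1)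
      = Real.sqrt ((∑ n, c n ^ 2) * ∑ n, D n ^ 2) := by
    rw [← Real.sqrt_mul (by positivity)]
    congr 1
    rw [hc2]; field_simp
  calc povmDist M (∑ n, (p n : ℂ) • ρ n) Ω ≤ ∑ n, c n * D n := step1
    _ ≤ Real.sqrt ((∑ n, c n ^ 2) * ∑ n, D n ^ 2) := step2
    _ = _ := by rw [← hrhs]
end

section
/- Let ρ_1,...,ρ_d be density matrices, Ω = (1/d)∑_n ρ_n, and M = {M_r : 1 ≤ r ≤ N} a POVM. For any integer k with 3k ≤ d, there exists a subset S ⊆ {1,...,d} with |S| = k such that the state ω = (1/k)∑_{j∈S} ρ_j satisfies D_M(ω, Ω) ≥ (1/N)·(1/d)∑_{n=1}^d D_M(ρ_n, Ω), where D_M(ρ,σ) = (1/2)∑_r |Tr(M_r(ρ-σ))|. -/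
/-!
Write `x i n = Re Tr(M_i (ρ_n - Ω))`. All matrices involved are Hermitian, so these traces are real
and `D_M(ρ_n, Ω) = ½ ∑_i |x i n|`; moreover `∑_n x i n = 0` since `Ω` is the mean of the `ρ_n`.
Pick an outcome `i₀` carrying at least the share `1/NM` of `∑_{i,n} |x i n|`. For the mixture `ω`
over a `k`-set `S`, `Re Tr(M_{i₀}(ω - Ω)) = (1/k) ∑_{j ∈ S} x i₀ j`, so it suffices to find `S`
with `k ∑_n |x i₀ n| ≤ d |∑_{j ∈ S} x i₀ j|`.

For a real vector `x` with zero sum and at most `d/2` positive entries, whose positive entries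
sum to `A = ½ ∑ |x|`, take for `S` the `k` largest entries. If they are all positive, their mean
is at least the mean `A / p ≥ 2A / d` of the `p` positive entries. Otherwise `S` contains the
positive entries together with `k - p` non-positive ones whose mean is at least the mean
`-A / (d - p)` of all non-positive entries, so `∑_S x ≥ A (d - k) / (d - p) ≥ 2kA / d`
as `3k ≤ d`. If more than `d/2` entries are positive, apply this to `-x`.
-/

open ComplexOrder

open Finset

section LargestEntries

variable {ι : Type*} [DecidableEq ι]

theorem exists_subset_card_eq_forall_sdiff_le (x : ι → ℝ) {s : Finset ι} {k : ℕ}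
    (hk : k ≤ #s) : ∃ t ⊆ s, #t = k ∧ ∀ i ∈ s \ t, ∀ j ∈ t, x i ≤ x j := by
  -- a `k`-subset of maximal sum cannot gain by exchanging `j` for `i`
  obtain ⟨t, ht, hmax⟩ := (s.powersetCard k).exists_max_image (fun t ↦ ∑ i ∈ t, x i)
    (powersetCard_nonempty.2 hk)
  rw [mem_powersetCard] at ht
  refine ⟨t, ht.1, ht.2, fun i hi j hj ↦ ?_⟩
  rw [mem_sdiff] at hi
  have hi' : i ∉ t.erase j := fun h ↦ hi.2 (mem_of_mem_erase h)
  have hexchange := hmax (insert i (t.erase j)) <| mem_powersetCard.2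
    ⟨insert_subset hi.1 ((erase_subset j t).trans ht.1), by
      rw [card_insert_of_notMem hi', card_erase_of_mem hj, ← ht.2]
      have := card_pos.2 ⟨j, hj⟩
      omega⟩
  rw [sum_insert hi', ← add_sum_erase t x hj] at hexchange
  linarith

theorem exists_subset_card_eq_mul_sum_le (x : ι → ℝ) {s : Finset ι} {k : ℕ} (hk : k ≤ #s) :
    ∃ t ⊆ s, #t = k ∧ k * ∑ i ∈ s, x i ≤ #s * ∑ i ∈ t, x i := by
  obtain ⟨t, hts, htk, hle⟩ := exists_subset_card_eq_forall_sdiff_le x hk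
  refine ⟨t, hts, htk, ?_⟩
  have hpair : ∑ i ∈ s \ t, ∑ _j ∈ t, x i ≤ ∑ i ∈ s \ t, ∑ j ∈ t, x j :=
    sum_le_sum fun i hi ↦ sum_le_sum fun j hj ↦ hle i hi j hj
  have hcard : (#(s \ t) : ℝ) + k = #s := by
    rw [← htk]
    exact_mod_cast card_sdiff_add_card_eq_card hts
  simp only [sum_const, htk, nsmul_eq_mul, ← mul_sum] at hpair
  rw [← sum_sdiff hts, ← hcard]
  nlinarith

end LargestEntries

section ZeroSum

variable {ι : Type*} [Fintype ι]

theorem sum_abs_eq_two_mul_sum_pos {x : ι → ℝ} (hx : ∑ i, x i = 0) :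
    ∑ i, |x i| = 2 * ∑ i with 0 < x i, x i := by
  have hsplit := sum_filter_add_sum_filter_not univ (fun i ↦ 0 < x i) x
  rw [← sum_filter_add_sum_filter_not univ (fun i ↦ 0 < x i) (fun i ↦ |x i|),
    sum_congr rfl fun i hi ↦ abs_of_pos (mem_filter.1 hi).2,
    sum_congr rfl fun i hi ↦ abs_of_nonpos (not_lt.1 (mem_filter.1 hi).2), sum_neg_distrib]
  linarith

theorem exists_card_eq_mul_sum_abs_le_mul_sum {x : ι → ℝ} (hx : ∑ i, x i = 0) {k : ℕ}
    (h3 : 3 * k ≤ Fintype.card ι) (hpos : 2 * #{i | 0 < x i} ≤ Fintype.card ι) :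
    ∃ S : Finset ι, #S = k ∧ k * ∑ i, |x i| ≤ Fintype.card ι * ∑ i ∈ S, x i := by
  classical
  rw [sum_abs_eq_two_mul_sum_pos hx]
  set P : Finset ι := {i | 0 < x i}
  have hP : 0 ≤ ∑ i ∈ P, x i := sum_nonneg fun i hi ↦ (mem_filter.1 hi).2.le
  have hd : (0 : ℝ) ≤ Fintype.card ι := by positivity
  have h3' : (3 * k : ℝ) ≤ Fintype.card ι := by exact_mod_cast h3
  rcases le_or_gt k #P with hkP | hPk
  · obtain ⟨T, hTP, hTk, hT⟩ := exists_subset_card_eq_mul_sum_le x hkP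
    have hT0 : 0 ≤ ∑ i ∈ T, x i := sum_nonneg fun i hi ↦ (mem_filter.1 (hTP hi)).2.le
    have hpos' : (2 * #P : ℝ) ≤ Fintype.card ι := by exact_mod_cast hpos
    exact ⟨T, hTk, by nlinarith⟩
  · have hPc : #P + #Pᶜ = Fintype.card ι := card_add_card_compl P
    obtain ⟨T, hTP, hTk, hT⟩ := exists_subset_card_eq_mul_sum_le x (s := Pᶜ) (k := k - #P)
      (by omega)
    have hdisj : Disjoint P T := disjoint_of_subset_right hTP disjoint_compl_right
    refine ⟨P ∪ T, by rw [card_union_of_disjoint hdisj]; omega, ?_⟩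
    have hsum : ∑ i ∈ Pᶜ, x i = -∑ i ∈ P, x i := by
      rw [eq_neg_iff_add_eq_zero, add_comm, sum_add_sum_compl, hx]
    have hq : (#Pᶜ : ℝ) = Fintype.card ι - #P := by
      rw [← hPc]; push_cast; ring
    rw [hsum, Nat.cast_sub hPk.le, hq] at hT
    rw [sum_union hdisj]
    have hPd : (#P : ℝ) < Fintype.card ι := by exact_mod_cast (by omega : #P < Fintype.card ι)
    refine le_of_mul_le_mul_left ?_ (sub_pos.2 hPd)
    nlinarith [mul_le_mul_of_nonneg_left hT hd, mul_nonneg (sub_nonneg.2 h3') (mul_nonneg hd hP),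
      mul_nonneg (mul_nonneg (Nat.cast_nonneg (α := ℝ) k) hP) (Nat.cast_nonneg (α := ℝ) #P)]

theorem exists_card_eq_mul_sum_abs_le_mul_abs_sum {x : ι → ℝ} (hx : ∑ i, x i = 0) {k : ℕ}
    (h3 : 3 * k ≤ Fintype.card ι) :
    ∃ S : Finset ι, #S = k ∧ k * ∑ i, |x i| ≤ Fintype.card ι * |∑ i ∈ S, x i| := by
  have hcard : #{i | 0 < x i} + #{i | 0 < -x i} ≤ Fintype.card ι :=
    calc #{i | 0 < x i} + #{i | 0 < -x i} ≤ #{i | 0 < x i} + #{i | ¬0 < x i} := by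
          gcongr with i
          intro hi
          linarith
      _ = Fintype.card ι := by rw [card_filter_add_card_filter_not, card_univ]
  rcases le_total (2 * #{i | 0 < x i}) (Fintype.card ι) with hpos | hneg
  · obtain ⟨S, hSk, hS⟩ := exists_card_eq_mul_sum_abs_le_mul_sum hx h3 hpos
    exact ⟨S, hSk, hS.trans (by gcongr; exact le_abs_self _)⟩
  · obtain ⟨S, hSk, hS⟩ := exists_card_eq_mul_sum_abs_le_mul_sum (x := fun i ↦ -x i)
      (by rw [sum_neg_distrib, hx, neg_zero]) h3 (by omega)
    simp only [abs_neg, sum_neg_distrib] at hS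
    exact ⟨S, hSk, hS.trans (by gcongr; exact neg_le_abs _)⟩

end ZeroSum

section Mean

variable {ι 𝕜 V : Type*} [Field 𝕜] [CharZero 𝕜] [AddCommGroup V] [Module 𝕜 V]

theorem one_div_card_smul_sum_sub {s : Finset ι} (hs : s.Nonempty) (a : ι → V) (b : V) :
    (1 / (#s : 𝕜)) • ∑ j ∈ s, a j - b = (1 / (#s : 𝕜)) • ∑ j ∈ s, (a j - b) := by
  rw [sum_sub_distrib, smul_sub, sum_const, ← Nat.cast_smul_eq_nsmul 𝕜, smul_smul,
    one_div_mul_cancel (Nat.cast_ne_zero.2 hs.card_pos.ne'), one_smul]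

theorem sum_sub_one_div_card_smul_sum [Fintype ι] [Nonempty ι] (a : ι → V) :
    ∑ j, (a j - (1 / (Fintype.card ι : 𝕜)) • ∑ m, a m) = 0 := by
  have h := one_div_card_smul_sum_sub (𝕜 := 𝕜) univ_nonempty a ((1 / (Fintype.card ι : 𝕜)) • ∑ m, a m)
  rw [card_univ, sub_self, eq_comm, smul_eq_zero] at h
  exact h.resolve_left (one_div_ne_zero (Nat.cast_ne_zero.2 Fintype.card_ne_zero))

end Mean

section Trace

open Matrix

variable {n ι : Type*} [Fintype n]

theorem Matrix.IsHermitian.im_trace_mul_eq_zero {A B : Matrix n n ℂ} (hA : A.IsHermitian)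
    (hB : B.IsHermitian) : (A * B).trace.im = 0 := by
  rw [← Complex.conj_eq_iff_im, ← Complex.star_def, ← trace_conjTranspose, conjTranspose_mul,
    hA.eq, hB.eq, trace_mul_comm]

theorem re_trace_mul_one_div_card_smul_sum_sub (A : Matrix n n ℂ) {s : Finset ι}
    (hs : s.Nonempty) (ρ : ι → Matrix n n ℂ) (σ : Matrix n n ℂ) :
    (A * ((1 / (#s : ℂ)) • ∑ j ∈ s, ρ j - σ)).trace.re
      = 1 / #s * ∑ j ∈ s, (A * (ρ j - σ)).trace.re := by
  rw [one_div_card_smul_sum_sub hs, Matrix.mul_smul, trace_smul, Matrix.mul_sum, trace_sum,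
    smul_eq_mul, ← Complex.ofReal_natCast, ← Complex.ofReal_one, ← Complex.ofReal_div,
    Complex.re_ofReal_mul, Complex.re_sum]

theorem sum_re_trace_mul_sub_one_div_card_smul_sum [Fintype ι] [Nonempty ι] (A : Matrix n n ℂ)
    (ρ : ι → Matrix n n ℂ) :
    ∑ j, (A * (ρ j - (1 / (Fintype.card ι : ℂ)) • ∑ m, ρ m)).trace.re = 0 := by
  rw [← Complex.re_sum, ← trace_sum, ← Matrix.mul_sum, sum_sub_one_div_card_smul_sum,
    Matrix.mul_zero, trace_zero, Complex.zero_re]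

end Trace

section POVM

variable {N r : ℕ} (M : Fin r → Matrix (Fin N) (Fin N) ℂ)

theorem half_abs_re_trace_le_povmDist (ρ σ : Matrix (Fin N) (Fin N) ℂ) (i : Fin r) :
    1 / 2 * |(M i * (ρ - σ)).trace.re| ≤ povmDist M ρ σ := by
  unfold povmDist
  gcongr
  exact (Complex.abs_re_le_norm _).trans <|
    single_le_sum (f := fun i ↦ ‖(M i * (ρ - σ)).trace‖) (fun i _ ↦ norm_nonneg _) (mem_univ i)

variable {M} in
theorem povmDist_eq_half_sum_abs_re (hM : ∀ i, (M i).IsHermitian)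
    {ρ σ : Matrix (Fin N) (Fin N) ℂ} (hρσ : (ρ - σ).IsHermitian) :
    povmDist M ρ σ = 1 / 2 * ∑ i, |(M i * (ρ - σ)).trace.re| := by
  unfold povmDist
  congr 1
  exact sum_congr rfl fun i _ ↦ (Complex.abs_re_eq_norm.2 ((hM i).im_trace_mul_eq_zero hρσ)).symm

end POVM

open Matrix in
theorem exists_distinguishable_mixture_general {N NM d : ℕ} (hNM : 0 < NM)
    (M : Fin NM → Matrix (Fin N) (Fin N) ℂ)
    (hM : ∀ i, (M i).PosSemidef)
    (ρ : Fin d → Matrix (Fin N) (Fin N) ℂ)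
    (hρ : ∀ n, (ρ n).PosSemidef)
    (k : ℕ) (hk : 0 < k) (h3 : 3 * k ≤ d) :
    ∃ S : Finset (Fin d), S.card = k ∧
      (1 / NM) * ((1 / d) * ∑ n, povmDist M (ρ n) ((1 / (d : ℂ)) • ∑ m, ρ m))
        ≤ povmDist M ((1 / (k : ℂ)) • ∑ j ∈ S, ρ j)
            ((1 / (d : ℂ)) • ∑ m, ρ m) := by
  have : NeZero d := ⟨by omega⟩
  have hd : (0 : ℝ) < d := Nat.cast_pos.2 this.pos
  have hk' : (0 : ℝ) < k := by exact_mod_cast hk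
  set Ω := (1 / (d : ℂ)) • ∑ m, ρ m
  have hΩ : Ω.IsHermitian := ((posSemidef_sum _ fun m _ ↦ hρ m).smul (by positivity)).1
  set x : Fin NM → Fin d → ℝ := fun i n ↦ (M i * (ρ n - Ω)).trace.re
  have hx : ∀ i, ∑ n, x i n = 0 := fun i ↦ by
    simpa only [Fintype.card_fin] using sum_re_trace_mul_sub_one_div_card_smul_sum (M i) ρ
  obtain ⟨i₀, -, hi₀⟩ := exists_le_of_le_expect ⟨⟨0, hNM⟩, mem_univ _⟩ le_rfl
    (f := fun i ↦ ∑ n, |x i n|)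
  rw [Fintype.expect_eq_sum_div_card, Fintype.card_fin, div_eq_inv_mul, ← one_div] at hi₀
  obtain ⟨S, hSk, hS⟩ := exists_card_eq_mul_sum_abs_le_mul_abs_sum (hx i₀) (k := k)
    (by rwa [Fintype.card_fin])
  rw [Fintype.card_fin] at hS
  refine ⟨S, hSk, ?_⟩
  calc 1 / NM * (1 / d * ∑ n, povmDist M (ρ n) Ω)
      = 1 / (2 * d) * (1 / NM * ∑ i, ∑ n, |x i n|) := by
        simp only [povmDist_eq_half_sum_abs_re (fun i ↦ (hM i).1) ((hρ _).1.sub hΩ), ← mul_sum]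
        rw [sum_comm]
        ring
    _ ≤ 1 / (2 * d) * ∑ n, |x i₀ n| := by gcongr
    _ ≤ 1 / (2 * k) * |∑ j ∈ S, x i₀ j| := by
        rw [one_div_mul_eq_div, one_div_mul_eq_div, div_le_div_iff₀ (by positivity) (by positivity)]
        linarith
    _ = 1 / 2 * |(M i₀ * ((1 / (k : ℂ)) • ∑ j ∈ S, ρ j - Ω)).trace.re| := by
        rw [← hSk, re_trace_mul_one_div_card_smul_sum_sub _ (card_pos.1 (hSk ▸ hk)), hSk, abs_mul,
          abs_of_pos (by positivity : (0 : ℝ) < 1 / k)]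
        ring
    _ ≤ _ := half_abs_re_trace_le_povmDist M _ _ i₀

open Matrix in
/-- Core of Theorem 2(i): there is a uniform mixture of `k` eigenstates whose
distinguishability from the microcanonical state is at least the average
eigenstate distinguishability divided by the number of outcomes. -/
theorem exists_distinguishable_mixture {N NM d : ℕ} (hNM : 0 < NM)
    (M : Fin NM → Matrix (Fin N) (Fin N) ℂ)
    (hM : ∀ i, (M i).PosSemidef) (hMsum : ∑ i, M i = 1)
    (ρ : Fin d → Matrix (Fin N) (Fin N) ℂ)
    (hρ : ∀ n, (ρ n).PosSemidef) (hρ1 : ∀ n, (ρ n).trace = 1)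
    (k : ℕ) (hk : 0 < k) (h3 : 3 * k ≤ d) :
    ∃ S : Finset (Fin d), S.card = k ∧
      (1 / NM) * ((1 / d) * ∑ n, povmDist M (ρ n) ((1 / (d : ℂ)) • ∑ m, ρ m))
        ≤ povmDist M ((1 / (k : ℂ)) • ∑ j ∈ S, ρ j)
            ((1 / (d : ℂ)) • ∑ m, ρ m) :=
  exists_distinguishable_mixture_general hNM M hM ρ hρ k hk h3
end

section
/- Let H = ∑_m E_m Π_m be a Hermitian matrix with spectral projections Π_m onto distinct eigenvalues E_m, each with rank(Π_m) ≤ g. Let ω be a density matrix commuting with H, with eigenvalues p_n. Then ∑_n p_n² ≤ ∑_m (Tr(Π_m ω))² ≤ g·∑_n p_n². -/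
section AuxDeff
open Matrix

lemma aux_sandwich {n : ℕ} (U D : Matrix (Fin n) (Fin n) ℂ) (hU : star U * U = 1) :
    (U * D * star U) * (U * D * star U) = U * (D * D) * star U := by
  have h : U * D * star U * (U * D * star U) = U * D * (star U * U) * (D * star U) := by
    noncomm_ring
  rw [h, hU]; noncomm_ring

lemma aux_trace {n : ℕ} (X : Matrix (Fin n) (Fin n) ℂ) (hX : X.IsHermitian) :
    X.trace = ∑ i, (hX.eigenvalues i : ℂ) := by
  nth_rw 1 [hX.spectral_theorem]
  rw [Unitary.conjStarAlgAut_apply, Matrix.trace_mul_cycle, Unitary.coe_star_mul_self, one_mul, trace_diagonal]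
  rfl

lemma aux_trace_sq {n : ℕ} (X : Matrix (Fin n) (Fin n) ℂ) (hX : X.IsHermitian) :
    (X * X).trace = ∑ i, ((hX.eigenvalues i : ℂ)) ^ 2 := by
  have hU : star (hX.eigenvectorUnitary : Matrix (Fin n) (Fin n) ℂ) * hX.eigenvectorUnitary = 1 :=
    Unitary.coe_star_mul_self _
  have h1 : X * X = (hX.eigenvectorUnitary : Matrix (Fin n) (Fin n) ℂ) *
      (diagonal (RCLike.ofReal ∘ hX.eigenvalues) * diagonal (RCLike.ofReal ∘ hX.eigenvalues)) *
      star (hX.eigenvectorUnitary : Matrix (Fin n) (Fin n) ℂ) := by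
    conv_lhs => rw [hX.spectral_theorem, Unitary.conjStarAlgAut_apply]
    exact aux_sandwich _ _ hU
  rw [h1, Matrix.trace_mul_cycle, ← Matrix.mul_assoc, hU, one_mul, diagonal_mul_diagonal,
    trace_diagonal]
  congr 1; funext i; simp [sq]

end AuxDeff


open ComplexOrder

open Matrix in
/-- For a density matrix `ω` commuting with a Hermitian `H = ∑ E_m Π_m`
whose spectral projections have rank at most `g`, the degenerate inverse
effective dimension `∑_m (Tr Π_m ω)²` lies between `∑ p_n²` and `g ∑ p_n²`,
where `p` are the eigenvalues of `ω`. -/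
theorem degenerate_deff_bounds {N M g : ℕ}
    (P : Fin M → Matrix (Fin N) (Fin N) ℂ)
    (hP : ∀ m, (P m).IsHermitian) (hP2 : ∀ m, P m * P m = P m)
    (hPorth : ∀ m m', m ≠ m' → P m * P m' = 0)
    (hPsum : ∑ m, P m = 1)
    (hPrank : ∀ m, (P m).rank ≤ g)
    (E : Fin M → ℝ) (hE : Function.Injective E)
    (ω : Matrix (Fin N) (Fin N) ℂ) (hω : ω.PosSemidef) (hω1 : ω.trace = 1)
    (hcomm : ω * (∑ m, (E m : ℂ) • P m) = (∑ m, (E m : ℂ) • P m) * ω) :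
    ∑ n, (hω.1.eigenvalues n) ^ 2 ≤ ∑ m, (((P m * ω).trace).re) ^ 2
    ∧ ∑ m, (((P m * ω).trace).re) ^ 2 ≤ g * ∑ n, (hω.1.eigenvalues n) ^ 2 := by
  classical
  set H : Matrix (Fin N) (Fin N) ℂ := ∑ m, (E m : ℂ) • P m with hH
  -- H * P m' = E m' • P m'
  have hHP : ∀ m', H * P m' = (E m' : ℂ) • P m' := by
    intro m'
    rw [hH, Finset.sum_mul]
    rw [Finset.sum_eq_single m']
    · rw [smul_mul_assoc, hP2]
    · intro m _ hne
      rw [smul_mul_assoc, hPorth m m' hne, smul_zero]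
    · intro h; exact absurd (Finset.mem_univ m') h
  have hPH : ∀ m, P m * H = (E m : ℂ) • P m := by
    intro m
    rw [hH, Finset.mul_sum]
    rw [Finset.sum_eq_single m]
    · rw [mul_smul_comm, hP2]
    · intro m' _ hne
      rw [mul_smul_comm, hPorth m m' (Ne.symm hne), smul_zero]
    · intro h; exact absurd (Finset.mem_univ m) h
  -- off-diagonal blocks vanish
  have hZ : ∀ m m', m ≠ m' → P m * ω * P m' = 0 := by
    intro m m' hne
    have h1 : P m * (ω * H) * P m' = P m * (H * ω) * P m' := by rw [hcomm]
    have hl : P m * (ω * H) * P m' = (E m' : ℂ) • (P m * ω * P m') := by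
      calc P m * (ω * H) * P m' = P m * ω * (H * P m') := by noncomm_ring
        _ = P m * ω * ((E m' : ℂ) • P m') := by rw [hHP]
        _ = (E m' : ℂ) • (P m * ω * P m') := by rw [mul_smul_comm]
    have hr : P m * (H * ω) * P m' = (E m : ℂ) • (P m * ω * P m') := by
      calc P m * (H * ω) * P m' = (P m * H) * ω * P m' := by noncomm_ring
        _ = ((E m : ℂ) • P m) * ω * P m' := by rw [hPH]
        _ = (E m : ℂ) • (P m * ω * P m') := by rw [smul_mul_assoc, smul_mul_assoc]
    have h2 : ((E m' : ℂ) - (E m : ℂ)) • (P m * ω * P m') = 0 := by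
      rw [sub_smul, ← hl, ← hr, h1, sub_self]
    rcases smul_eq_zero.mp h2 with h | h
    · exfalso
      apply hne
      apply hE
      have := sub_eq_zero.mp h
      exact_mod_cast this.symm
    · exact h
  -- ω commutes with each P m
  have hcommP : ∀ m, ω * P m = P m * ω := by
    intro m
    have ha : P m * ω = P m * ω * P m := by
      calc P m * ω = (P m * ω) * ∑ m', P m' := by rw [hPsum, mul_one]
        _ = ∑ m', P m * ω * P m' := by rw [Finset.mul_sum]
        _ = P m * ω * P m := by
            rw [Finset.sum_eq_single m]
            · intro m' _ hne; exact hZ m m' (Ne.symm hne)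
            · intro h; exact absurd (Finset.mem_univ m) h
    have hb : ω * P m = P m * ω * P m := by
      calc ω * P m = (∑ m', P m') * (ω * P m) := by rw [hPsum, one_mul]
        _ = ∑ m', P m' * ω * P m := by rw [Finset.sum_mul]; simp_rw [mul_assoc]
        _ = P m * ω * P m := by
            rw [Finset.sum_eq_single m]
            · intro m' _ hne; exact hZ m' m hne
            · intro h; exact absurd (Finset.mem_univ m) h
    rw [hb, ← ha]
  -- each P m * ω is PSD
  have hkey : ∀ m, P m * ω * P m = P m * ω := by
    intro m
    rw [mul_assoc, hcommP m, ← mul_assoc, hP2]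
  have hXpsd : ∀ m, (P m * ω).PosSemidef := by
    intro m
    have := hω.mul_mul_conjTranspose_same (P m)
    rw [(hP m).eq, hkey m] at this
    exact this
  -- squares
  have hXsq : ∀ m, (P m * ω) * (P m * ω) = P m * (ω * ω) := by
    intro m
    calc P m * ω * (P m * ω) = P m * (ω * P m) * ω := by noncomm_ring
      _ = P m * (P m * ω) * ω := by rw [hcommP m]
      _ = (P m * P m) * (ω * ω) := by noncomm_ring
      _ = P m * (ω * ω) := by rw [hP2]
  have hsum_sq : (∑ m, ((P m * ω) * (P m * ω))) = ω * ω := by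
    simp_rw [hXsq]
    rw [← Finset.sum_mul, hPsum, one_mul]
  -- real trace identities
  have htr : ∀ m, ((P m * ω).trace).re = ∑ i, (hXpsd m).1.eigenvalues i := by
    intro m
    rw [aux_trace _ (hXpsd m).1, ← Complex.ofReal_sum, Complex.ofReal_re]
  have htr2 : ∀ m, (((P m * ω) * (P m * ω)).trace).re = ∑ i, ((hXpsd m).1.eigenvalues i) ^ 2 := by
    intro m
    rw [aux_trace_sq _ (hXpsd m).1]
    simp_rw [← Complex.ofReal_pow]
    rw [← Complex.ofReal_sum, Complex.ofReal_re]
  have hωtr2 : ((ω * ω).trace).re = ∑ n, (hω.1.eigenvalues n) ^ 2 := by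
    rw [aux_trace_sq _ hω.1]
    simp_rw [← Complex.ofReal_pow]
    rw [← Complex.ofReal_sum, Complex.ofReal_re]
  have hsplit : ∑ n, (hω.1.eigenvalues n) ^ 2 = ∑ m, ∑ i, ((hXpsd m).1.eigenvalues i) ^ 2 := by
    rw [← hωtr2, ← hsum_sq, Matrix.trace_sum]
    rw [Complex.re_sum]
    exact Finset.sum_congr rfl fun m _ => htr2 m
  -- per-m inequalities
  have hq0 : ∀ m i, 0 ≤ (hXpsd m).1.eigenvalues i := fun m i => (hXpsd m).eigenvalues_nonneg i
  have hineq1 : ∀ m, ∑ i, ((hXpsd m).1.eigenvalues i) ^ 2 ≤ (∑ i, (hXpsd m).1.eigenvalues i) ^ 2 :=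
    fun m => Finset.sum_sq_le_sq_sum_of_nonneg (fun i _ => hq0 m i)
  have hineq2 : ∀ m, (∑ i, (hXpsd m).1.eigenvalues i) ^ 2
      ≤ (g : ℝ) * ∑ i, ((hXpsd m).1.eigenvalues i) ^ 2 := by
    intro m
    set q := (hXpsd m).1.eigenvalues with hqdef
    set s : Finset (Fin N) := Finset.univ.filter (fun i => q i ≠ 0) with hs
    have h1 : ∑ i, q i = ∑ i ∈ s, q i := (Finset.sum_filter_ne_zero _).symm
    have h2 : (∑ i ∈ s, q i) ^ 2 ≤ (s.card : ℝ) * ∑ i ∈ s, q i ^ 2 :=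
      sq_sum_le_card_mul_sum_sq
    have hcard : s.card ≤ g := by
      have : s.card = (P m * ω).rank := by
        rw [(hXpsd m).1.rank_eq_card_non_zero_eigs, Fintype.card_subtype]
      rw [this]
      exact le_trans (Matrix.rank_mul_le_left _ _) (hPrank m)
    have h4 : ∑ i ∈ s, q i ^ 2 ≤ ∑ i, q i ^ 2 :=
      Finset.sum_le_sum_of_subset_of_nonneg (Finset.subset_univ s)
        (fun i _ _ => sq_nonneg _)
    calc (∑ i, q i) ^ 2 = (∑ i ∈ s, q i) ^ 2 := by rw [h1]
      _ ≤ (s.card : ℝ) * ∑ i ∈ s, q i ^ 2 := h2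
      _ ≤ (g : ℝ) * ∑ i, q i ^ 2 := by
          apply mul_le_mul (by exact_mod_cast hcard) h4
            (Finset.sum_nonneg fun i _ => sq_nonneg _) (Nat.cast_nonneg _)
  constructor
  · calc ∑ n, (hω.1.eigenvalues n) ^ 2
        = ∑ m, ∑ i, ((hXpsd m).1.eigenvalues i) ^ 2 := hsplit
      _ ≤ ∑ m, (∑ i, (hXpsd m).1.eigenvalues i) ^ 2 :=
          Finset.sum_le_sum fun m _ => hineq1 m
      _ = ∑ m, (((P m * ω).trace).re) ^ 2 := by
          exact Finset.sum_congr rfl fun m _ => by rw [htr]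
  · calc ∑ m, (((P m * ω).trace).re) ^ 2
        = ∑ m, (∑ i, (hXpsd m).1.eigenvalues i) ^ 2 :=
          Finset.sum_congr rfl fun m _ => by rw [htr]
      _ ≤ ∑ m, (g : ℝ) * ∑ i, ((hXpsd m).1.eigenvalues i) ^ 2 :=
          Finset.sum_le_sum fun m _ => hineq2 m
      _ = g * ∑ n, (hω.1.eigenvalues n) ^ 2 := by
          rw [← Finset.mul_sum, hsplit]
end

section
/- Let ρ_1,...,ρ_d be pairwise orthogonal rank-one projections on ℂ^N, Ω = (1/d)∑_n ρ_n, and ω = ∑_n p_n ρ_n for a probability distribution p. With respect to the measurement set M = {M_1,...,M_d} where M_m has binary outcomes ρ_m and I − ρ_m, the distinguishability D_M(ω,Ω) = max_m |p_m − 1/d| satisfies D_M(ω,Ω) ≤ 1/√(d_eff(ω)), where d_eff(ω) = (∑_n p_n²)⁻¹. -/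
/-!
On the span of orthogonal rank-one projections `ρ n`, the measurement `ρ m` reads off the `m`-th
coefficient, so `ω - Ω = ∑ (p n - 1/d) • ρ n` gives `tr(ρ m (ω - Ω)) = p m - 1/d`; since `ω - Ω` is
traceless, the complementary outcome `1 - ρ m` contributes the same amount with opposite sign.
For the bound, `(p m - 1/d)²` is one term of `∑ (p n - 1/d)² = ∑ p n² - 1/d ≤ ∑ p n²`.
-/

open Finset

section Distribution

variable {ι : Type*} [Fintype ι] {f : ι → ℝ}

lemma sum_sub_inv_card_eq_zero (hf : ∑ i, f i = 1) :
    ∑ i, (f i - 1 / Fintype.card ι) = 0 := by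
  rcases isEmpty_or_nonempty ι with hι | hι
  · simp at hf
  have hcard : (Fintype.card ι : ℝ) ≠ 0 := by positivity
  rw [sum_sub_distrib, hf, sum_const, card_univ, nsmul_eq_mul]
  field_simp
  ring

lemma sum_sq_sub_inv_card (hf : ∑ i, f i = 1) :
    ∑ i, (f i - 1 / Fintype.card ι) ^ 2 = ∑ i, f i ^ 2 - 1 / Fintype.card ι := by
  set c : ℝ := 1 / Fintype.card ι
  have hc : ∑ i, (f i - c) = 0 := sum_sub_inv_card_eq_zero hf
  calc ∑ i, (f i - c) ^ 2 = ∑ i, (f i ^ 2 - c * (f i - c) - c * f i) := by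
        congr 1 with i; ring
    _ = ∑ i, f i ^ 2 - c := by
        rw [sum_sub_distrib, sum_sub_distrib, ← mul_sum, ← mul_sum, hc, hf]; ring

lemma abs_sub_inv_card_le_sqrt_sum_sq (hf : ∑ i, f i = 1) (i : ι) :
    |f i - 1 / Fintype.card ι| ≤ √(∑ j, f j ^ 2) := by
  have hcard : (0 : ℝ) ≤ 1 / Fintype.card ι := by positivity
  calc |f i - 1 / Fintype.card ι| ≤ √(∑ j, (f j - 1 / Fintype.card ι) ^ 2) :=
        Real.abs_le_sqrt <| single_le_sum (f := fun j => (f j - 1 / Fintype.card ι) ^ 2)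
          (fun j _ => sq_nonneg _) (mem_univ i)
    _ ≤ √(∑ j, f j ^ 2) := by
        rw [sum_sq_sub_inv_card hf]
        exact Real.sqrt_le_sqrt (by linarith)

end Distribution

section OrthogonalProjections

open Matrix

variable {ι n : Type*} [Fintype ι] [Fintype n]

section

variable {R : Type*} [CommRing R] {ρ : ι → Matrix n n R}

lemma trace_sum_smul_of_trace_eq_one (htr : ∀ i, (ρ i).trace = 1) (c : ι → R) :
    (∑ i, c i • ρ i).trace = ∑ i, c i := by
  simp [trace_sum, trace_smul, htr]

lemma trace_mul_sum_smul_of_orthogonal [DecidableEq ι] (hproj : ∀ i, ρ i * ρ i = ρ i)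
    (htr : ∀ i, (ρ i).trace = 1) (horth : ∀ i j, i ≠ j → ρ i * ρ j = 0) (c : ι → R) (m : ι) :
    (ρ m * ∑ i, c i • ρ i).trace = c m := by
  rw [mul_sum, trace_sum, sum_eq_single m]
  · rw [Matrix.mul_smul, trace_smul, hproj, htr, smul_eq_mul, mul_one]
  · intro i _ hi
    rw [Matrix.mul_smul, horth m i (Ne.symm hi), smul_zero, trace_zero]
  · simp

end

lemma half_norm_trace_mul_add_norm_trace_one_sub_mul {R : Type*} [DecidableEq n] [NormedRing R]
    {X : Matrix n n R} (hX : X.trace = 0) (P : Matrix n n R) :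
    (1 / 2 : ℝ) * (‖(P * X).trace‖ + ‖((1 - P) * X).trace‖) = ‖(P * X).trace‖ := by
  rw [sub_mul, one_mul, trace_sub, hX, zero_sub, norm_neg]
  ring

end OrthogonalProjections

open Matrix in
theorem counterexample_thermalisation_general {N d : ℕ}
    (ρ : Fin d → Matrix (Fin N) (Fin N) ℂ)
    (hproj : ∀ n, ρ n * ρ n = ρ n)
    (htr : ∀ n, (ρ n).trace = 1)
    (horth : ∀ m n, m ≠ n → ρ m * ρ n = 0)
    (p : Fin d → ℝ) (hp1 : ∑ n, p n = 1) :
    (∀ m : Fin d,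
      (1 / 2 : ℝ) * (Norm.norm ((ρ m * ((∑ n, (p n : ℂ) • ρ n) - (1 / (d : ℂ)) • ∑ l, ρ l)).trace)
          + Norm.norm (((1 - ρ m) * ((∑ n, (p n : ℂ) • ρ n) - (1 / (d : ℂ)) • ∑ l, ρ l)).trace))
        = |p m - 1 / d|)
    ∧ ∀ m : Fin d, |p m - 1 / d| ≤ Real.sqrt (∑ n, (p n) ^ 2) := by
  have hcoeff : ∑ n, (p n - 1 / d) = 0 := by
    simpa using sum_sub_inv_card_eq_zero hp1
  have hdiff : (∑ n, (p n : ℂ) • ρ n) - (1 / (d : ℂ)) • ∑ l, ρ l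
      = ∑ n, ((p n - 1 / d : ℝ) : ℂ) • ρ n := by
    simp [smul_sum, sub_smul]
  have htraceless : (∑ n, ((p n - 1 / d : ℝ) : ℂ) • ρ n).trace = 0 := by
    rw [trace_sum_smul_of_trace_eq_one htr, ← Complex.ofReal_sum, hcoeff, Complex.ofReal_zero]
  refine ⟨fun m => ?_, fun m => by simpa using abs_sub_inv_card_le_sqrt_sum_sq hp1 m⟩
  rw [hdiff, half_norm_trace_mul_add_norm_trace_one_sub_mul htraceless,
    trace_mul_sum_smul_of_orthogonal hproj htr horth, Complex.norm_real, Real.norm_eq_abs]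

open Matrix in
/-- For orthonormal pure states `ρ_n`, their uniform mixture `Ω`, and a
time-averaged state `ω = ∑ p_n ρ_n`, each binary measurement `{ρ_m, I - ρ_m}`
distinguishes `ω` from `Ω` by exactly `|p_m - 1/d|`, which is at most
`1/√(d_eff(ω)) = √(∑ p_n²)`. -/
theorem counterexample_thermalisation {N d : ℕ} (hd : 0 < d) (hdN : d ≤ N)
    (ρ : Fin d → Matrix (Fin N) (Fin N) ℂ)
    (hherm : ∀ n, (ρ n).IsHermitian)
    (hproj : ∀ n, ρ n * ρ n = ρ n)
    (htr : ∀ n, (ρ n).trace = 1)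
    (horth : ∀ m n, m ≠ n → ρ m * ρ n = 0)
    (p : Fin d → ℝ) (hp : ∀ n, 0 ≤ p n) (hp1 : ∑ n, p n = 1) :
    (∀ m : Fin d,
      (1 / 2 : ℝ) * (Norm.norm ((ρ m * ((∑ n, (p n : ℂ) • ρ n) - (1 / (d : ℂ)) • ∑ l, ρ l)).trace)
          + Norm.norm (((1 - ρ m) * ((∑ n, (p n : ℂ) • ρ n) - (1 / (d : ℂ)) • ∑ l, ρ l)).trace))
        = |p m - 1 / d|)
    ∧ ∀ m : Fin d, |p m - 1 / d| ≤ Real.sqrt (∑ n, (p n) ^ 2) :=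
  counterexample_thermalisation_general ρ hproj htr horth p hp1
end

section
/- Suppose every uniform mixture ω = (1/k)∑_{j∈S} ρ_j of k eigenstates with d/4 ≤ k ≤ d/3 satisfies D_M(ω,Ω) ≤ ε for every POVM M in a finite measurement set 𝓜 with total outcome count N_𝓜 = ∑_{M∈𝓜} N(M). Then the mean eigenstate distinguishability satisfies (1/d)∑_{n=1}^d D_𝓜(ρ_n,Ω) ≤ N_𝓜·ε, where D_𝓜(ρ,σ) = max_{M∈𝓜} D_M(ρ,σ) and Ω = (1/d)∑_n ρ_n. -/
open ComplexOrder

open Finset in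
private lemma aux_top {d k : ℕ} (hk : 0 < k) {ε : ℝ} (a : Fin d → ℝ)
    {P : Finset (Fin d)} (hm : k ≤ P.card)
    (hS : ∀ S : Finset (Fin d), S.card = k → ∑ j ∈ S, a j ≤ 2 * k * ε) :
    (k : ℝ) * ∑ l ∈ P, a l ≤ (P.card : ℝ) * (2 * k * ε) := by
  obtain ⟨S, hSmem, hSmax⟩ := Finset.exists_max_image (P.powersetCard k)
      (fun S => ∑ j ∈ S, a j) (Finset.powersetCard_nonempty.mpr hm)
  rw [Finset.mem_powersetCard] at hSmem
  obtain ⟨hSP, hScard⟩ := hSmem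
  have hT : ∑ j ∈ S, a j ≤ 2 * k * ε := hS S hScard
  have key : ∀ l ∈ P \ S, (k : ℝ) * a l ≤ ∑ j ∈ S, a j := by
    intro l hl
    rw [mem_sdiff] at hl
    have h1 : ∀ j ∈ S, a l ≤ a j := by
      intro j hj
      have hlnotS : l ∉ S.erase j := fun h => hl.2 (erase_subset _ _ h)
      have hmem : insert l (S.erase j) ∈ P.powersetCard k := by
        rw [mem_powersetCard]
        refine ⟨?_, ?_⟩
        · intro x hx
          rcases mem_insert.1 hx with rfl | hx
          · exact hl.1
          · exact hSP (erase_subset _ _ hx)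
        · rw [card_insert_of_notMem hlnotS, card_erase_of_mem hj, hScard]
          omega
      have hle := hSmax _ hmem
      simp only [sum_insert hlnotS, sum_erase_eq_sub hj] at hle
      linarith
    calc (k : ℝ) * a l = ∑ _j ∈ S, a l := by rw [sum_const, hScard, nsmul_eq_mul]
      _ ≤ ∑ j ∈ S, a j := sum_le_sum h1
  have h2 : (k : ℝ) * ∑ l ∈ P \ S, a l ≤ ((P.card : ℝ) - k) * ∑ j ∈ S, a j := by
    calc (k:ℝ) * ∑ l ∈ P \ S, a l = ∑ l ∈ P \ S, (k:ℝ) * a l := by rw [mul_sum]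
      _ ≤ ∑ _l ∈ P \ S, ∑ j ∈ S, a j := sum_le_sum key
      _ = ((P \ S).card : ℝ) * ∑ j ∈ S, a j := by rw [sum_const, nsmul_eq_mul]
      _ = ((P.card : ℝ) - k) * ∑ j ∈ S, a j := by
          rw [card_sdiff_of_subset hSP, hScard, Nat.cast_sub hm]
  have hsplit : ∑ l ∈ P \ S, a l + ∑ l ∈ S, a l = ∑ l ∈ P, a l := Finset.sum_sdiff hSP
  have hmk : (k : ℝ) ≤ (P.card : ℝ) := by exact_mod_cast hm
  nlinarith [mul_le_mul_of_nonneg_left hT (by positivity : (0:ℝ) ≤ (P.card : ℝ))]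

open Finset in
private lemma aux_pad {d k : ℕ} (hk : 0 < k) (hk3 : 3 * k ≤ d) {ε : ℝ}
    (a : Fin d → ℝ) (hsum : ∑ n, a n = 0)
    {P : Finset (Fin d)} (hPdef : ∀ l, l ∈ P ↔ 0 < a l)
    (hm : P.card < k)
    (hS : ∀ S : Finset (Fin d), S.card = k → ∑ j ∈ S, a j ≤ 2 * k * ε) :
    ∑ l ∈ P, a l ≤ 3 * k * ε := by
  have hkd : k ≤ d := by omega
  obtain ⟨S₀, hS₀P, hS₀c⟩ := Finset.exists_superset_card_eq (le_of_lt hm)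
    (by simpa using hkd)
  have hFne : ((univ.powersetCard k).filter (fun S => P ⊆ S)).Nonempty :=
    ⟨S₀, by simp [mem_powersetCard, hS₀c, hS₀P]⟩
  obtain ⟨S, hSmem, hSmax⟩ := Finset.exists_max_image _ (fun S => ∑ j ∈ S, a j) hFne
  simp only [mem_filter, mem_powersetCard] at hSmem
  obtain ⟨⟨-, hScard⟩, hPS⟩ := hSmem
  have hT : ∑ j ∈ S, a j ≤ 2 * k * ε := hS S hScard
  have hout : ∀ l, l ∉ S → a l ≤ 0 := by
    intro l hl
    by_contra h
    exact hl (hPS ((hPdef l).mpr (by linarith)))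
  -- swap property
  have key : ∀ j ∈ S \ P, ∀ l ∈ univ \ S, a l ≤ a j := by
    intro j hj l hl
    rw [mem_sdiff] at hj hl
    have hlnotS : l ∉ S.erase j := fun h => hl.2 (erase_subset _ _ h)
    have hmem : insert l (S.erase j) ∈ (univ.powersetCard k).filter (fun S => P ⊆ S) := by
      simp only [mem_filter, mem_powersetCard]
      refine ⟨⟨subset_univ _, ?_⟩, ?_⟩
      · rw [card_insert_of_notMem hlnotS, card_erase_of_mem hj.1, hScard]
        omega
      · intro x hx
        have hxS : x ∈ S := hPS hx
        have hxj : x ≠ j := fun h => hj.2 (h ▸ hx)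
        exact mem_insert_of_mem (mem_erase.mpr ⟨hxj, hxS⟩)
    have hle := hSmax _ hmem
    simp only [sum_insert hlnotS, sum_erase_eq_sub hj.1] at hle
    linarith
  -- notation
  set T := ∑ j ∈ S, a j with hTdef
  set A := ∑ j ∈ S \ P, a j with hAdef
  set y := ∑ l ∈ univ \ S, a l with hydef
  set p := ∑ l ∈ P, a l with hpdef
  have e1 : A + p = T := Finset.sum_sdiff hPS
  have e2 : y + T = 0 := by rw [hydef, hTdef, Finset.sum_sdiff (subset_univ S), hsum]
  have ecard : ((univ \ S).card : ℝ) = (d : ℝ) - k := by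
    rw [card_sdiff_of_subset (subset_univ S), hScard, card_univ, Fintype.card_fin, Nat.cast_sub hkd]
  have e4 : ((S \ P).card : ℝ) * y ≤ ((d : ℝ) - k) * A := by
    calc ((S \ P).card : ℝ) * y = ∑ _j ∈ S \ P, y := by rw [sum_const, nsmul_eq_mul]
      _ ≤ ∑ j ∈ S \ P, ((d : ℝ) - k) * a j := by
          refine sum_le_sum fun j hj => ?_
          calc y ≤ ∑ _l ∈ univ \ S, a j := sum_le_sum (fun l hl => key j hj l hl)
            _ = ((d : ℝ) - k) * a j := by rw [sum_const, nsmul_eq_mul, ecard]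
      _ = ((d : ℝ) - k) * A := by rw [hAdef, mul_sum]
  have e5 : A ≤ 0 := sum_nonpos fun j hj => by
    rw [mem_sdiff] at hj
    by_contra h
    exact hj.2 ((hPdef j).mpr (by linarith))
  have e6 : 0 ≤ p := sum_nonneg fun l hl => le_of_lt ((hPdef l).mp hl)
  have hy : y ≤ 0 := sum_nonpos fun l hl => hout l (mem_sdiff.mp hl).2
  have hc : ((S \ P).card : ℝ) ≤ (k : ℝ) := by
    exact_mod_cast (card_le_card (sdiff_subset)).trans_eq hScard
  have hcnn : (0:ℝ) ≤ ((S \ P).card : ℝ) := Nat.cast_nonneg _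
  have hk' : (0:ℝ) < (k:ℝ) := by exact_mod_cast hk
  have hdk : 3 * (k:ℝ) ≤ (d:ℝ) := by exact_mod_cast hk3
  nlinarith [mul_nonneg (sub_nonneg.mpr hc) (neg_nonneg.mpr hy),
    mul_nonneg (sub_nonneg.mpr hdk) (neg_nonneg.mpr e5), e4, e1, e2, hT, e6, hk'.le]

open Finset in
private lemma aux_key {d k : ℕ} (hk : 0 < k) (hk3 : 3 * k ≤ d) {ε : ℝ} (hε : 0 ≤ ε)
    (a : Fin d → ℝ) (hsum : ∑ n, a n = 0)
    (hS : ∀ S : Finset (Fin d), S.card = k → |∑ j ∈ S, a j| ≤ 2 * k * ε) :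
    ∑ n, |a n| ≤ 2 * d * ε := by
  classical
  set P := univ.filter (fun n : Fin d => 0 < a n) with hP
  set Q := univ.filter (fun n : Fin d => 0 < -a n) with hQ
  have hPmem : ∀ l, l ∈ P ↔ 0 < a l := by intro l; simp [hP]
  have hQmem : ∀ l, l ∈ Q ↔ 0 < -(a l) := by intro l; simp [hQ]
  have hQsub : Q ⊆ univ.filter (fun n => ¬ 0 < a n) := by
    intro x hx
    simp only [hQ, mem_filter, mem_univ, true_and] at hx ⊢
    linarith
  have hnegsum : ∑ l ∈ univ.filter (fun n => ¬ 0 < a n), a l = ∑ l ∈ Q, a l := by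
    refine (Finset.sum_subset hQsub ?_).symm
    intro x hx hxQ
    simp only [mem_filter, mem_univ, true_and] at hx
    simp only [hQ, mem_filter, mem_univ, true_and] at hxQ
    linarith
  have hsplit := Finset.sum_filter_add_sum_filter_not univ (fun n : Fin d => 0 < a n) a
  have hpn : ∑ l ∈ P, a l = ∑ l ∈ Q, -(a l) := by
    rw [Finset.sum_neg_distrib]
    rw [hsum] at hsplit
    rw [hnegsum] at hsplit
    linarith
  have habs : ∑ n, |a n| = ∑ l ∈ P, a l + ∑ l ∈ Q, -(a l) := by
    rw [← Finset.sum_filter_add_sum_filter_not univ (fun n : Fin d => 0 < a n) (fun n => |a n|)]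
    congr 1
    · exact Finset.sum_congr rfl fun x hx => abs_of_pos ((hPmem x).mp hx)
    · calc ∑ x ∈ univ.filter (fun n => ¬ 0 < a n), |a x|
          = ∑ x ∈ univ.filter (fun n => ¬ 0 < a n), -(a x) := by
            refine Finset.sum_congr rfl fun x hx => ?_
            simp only [mem_filter, mem_univ, true_and] at hx
            exact abs_of_nonpos (by linarith)
        _ = ∑ l ∈ Q, -(a l) := by
            rw [Finset.sum_neg_distrib, Finset.sum_neg_distrib, hnegsum]
  -- one-sided hypotheses
  have hSa : ∀ S : Finset (Fin d), S.card = k → ∑ j ∈ S, a j ≤ 2 * k * ε :=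
    fun S hc => (le_abs_self _).trans (hS S hc)
  have hSna : ∀ S : Finset (Fin d), S.card = k → ∑ j ∈ S, -(a j) ≤ 2 * k * ε := by
    intro S hc
    rw [Finset.sum_neg_distrib]
    exact (neg_le_abs _).trans (hS S hc)
  have hcard : (P.card : ℝ) + (Q.card : ℝ) ≤ (d : ℝ) := by
    have hdisj : Disjoint P Q := by
      rw [Finset.disjoint_left]
      intro x hx hx'
      have := (hPmem x).mp hx
      have := (hQmem x).mp hx'
      linarith
    have := (card_union_of_disjoint hdisj) ▸ card_le_card (subset_univ (P ∪ Q))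
    rw [card_univ, Fintype.card_fin] at this
    exact_mod_cast this
  have hk' : (0:ℝ) < (k:ℝ) := by exact_mod_cast hk
  have hdk : 3 * (k:ℝ) ≤ (d:ℝ) := by exact_mod_cast hk3
  rw [habs]
  by_cases h1 : k ≤ P.card
  · by_cases h2 : k ≤ Q.card
    · have hA1 := aux_top hk a h1 hSa
      have hA2 := aux_top hk (fun n => -(a n)) h2 hSna
      have hA2' : (k:ℝ) * ∑ l ∈ Q, -(a l) ≤ (Q.card : ℝ) * (2 * k * ε) := hA2
      have hmul := mul_le_mul_of_nonneg_right hcard (by positivity : (0:ℝ) ≤ 2 * k * ε)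
      nlinarith [hA1, hA2', hmul, hk']
    · have hB := aux_pad hk hk3 (fun n => -(a n))
        (by rw [Finset.sum_neg_distrib, hsum, neg_zero]) hQmem (lt_of_not_ge h2) hSna
      nlinarith [hB, hε, hk', hdk, hpn]
  · have hB := aux_pad hk hk3 a hsum hPmem (lt_of_not_ge h1) hSa
    nlinarith [hB, hε, hk', hdk, hpn]


open Matrix in
private lemma povmDist_nonneg {N r : ℕ} (M : Fin r → Matrix (Fin N) (Fin N) ℂ)
    (ρ σ : Matrix (Fin N) (Fin N) ℂ) : 0 ≤ povmDist M ρ σ := by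
  unfold povmDist; positivity

open Matrix in
private lemma trace_herm_real {N : ℕ} {A B : Matrix (Fin N) (Fin N) ℂ}
    (hA : A.IsHermitian) (hB : B.IsHermitian) :
    (((A * B).trace).re : ℂ) = (A * B).trace := by
  have h : star ((A * B).trace) = (A * B).trace := by
    rw [← Matrix.trace_conjTranspose, Matrix.conjTranspose_mul, hA.eq, hB.eq,
      Matrix.trace_mul_comm]
  exact Complex.conj_eq_iff_re.mp h

open Matrix Finset in
/-- Theorem 2(i): if every uniform mixture of `k` eigenstates with
`d/4 ≤ k ≤ d/3` is at most `ε`-distinguishable from the microcanonical state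
by every POVM in the measurement set, then the mean eigenstate
distinguishability is at most `N_𝓜 · ε`. -/
theorem mean_ETH_necessary {N d : ℕ} (hd : 12 ≤ d)
    {ι : Type*} [Fintype ι] [Nonempty ι]
    (nM : ι → ℕ)
    (Mop : (i : ι) → Fin (nM i) → Matrix (Fin N) (Fin N) ℂ)
    (hMpos : ∀ i r, (Mop i r).PosSemidef)
    (hMsum : ∀ i, ∑ r, Mop i r = 1)
    (ρ : Fin d → Matrix (Fin N) (Fin N) ℂ)
    (hρ : ∀ n, (ρ n).PosSemidef) (hρ1 : ∀ n, (ρ n).trace = 1)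
    (ε : ℝ)
    (hTherm : ∀ k : ℕ, (d : ℝ) / 4 ≤ k → (k : ℝ) ≤ (d : ℝ) / 3 →
      ∀ S : Finset (Fin d), S.card = k → ∀ i : ι,
        povmDist (Mop i) ((1 / (k : ℂ)) • ∑ j ∈ S, ρ j)
          ((1 / (d : ℂ)) • ∑ m, ρ m) ≤ ε) :
    (1 / d) * ∑ n, (Finset.univ.sup' Finset.univ_nonempty fun i : ι =>
        povmDist (Mop i) (ρ n) ((1 / (d : ℂ)) • ∑ m, ρ m))
      ≤ (∑ i, (nM i : ℝ)) * ε := by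
  classical
  have hdnat : 0 < d := by omega
  have hd0 : (0:ℝ) < d := by exact_mod_cast hdnat
  have hdC : (d:ℂ) ≠ 0 := by exact_mod_cast hdnat.ne'
  set Ω : Matrix (Fin N) (Fin N) ℂ := (1 / (d : ℂ)) • ∑ m, ρ m with hΩdef
  have hΩherm : Ω.IsHermitian := by
    show _ᴴ = _
    rw [hΩdef, Matrix.conjTranspose_smul, Matrix.conjTranspose_sum]
    congr 1
    · simp
    · exact Finset.sum_congr rfl fun n _ => (hρ n).1.eq
  -- the choice of k
  set k := (d + 3) / 4 with hkdef
  have hk0 : 0 < k := by omega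
  have hk3 : 3 * k ≤ d := by omega
  have hkd : k ≤ d := by omega
  have hk4 : (d:ℝ) / 4 ≤ (k:ℝ) := by
    rw [div_le_iff₀ (by norm_num)]
    exact_mod_cast (by omega : d ≤ k * 4)
  have hk3' : (k:ℝ) ≤ (d:ℝ) / 3 := by
    rw [le_div_iff₀ (by norm_num)]
    exact_mod_cast (by omega : k * 3 ≤ d)
  -- ε is nonnegative
  obtain ⟨S₀, -, hS₀⟩ := Finset.exists_subset_card_eq
    (show k ≤ (Finset.univ : Finset (Fin d)).card by simpa using hkd)
  have hε : 0 ≤ ε :=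
    le_trans (povmDist_nonneg _ _ _) (hTherm k hk4 hk3' S₀ hS₀ (Classical.arbitrary ι))
  -- key estimate for each measurement and outcome
  have key : ∀ (i : ι) (r : Fin (nM i)),
      ∑ n, ‖(Mop i r * (ρ n - Ω)).trace‖ ≤ 2 * d * ε := by
    intro i r
    set t : Fin d → ℂ := fun n => ((Mop i r) * (ρ n - Ω)).trace with htdef
    have hreal : ∀ n, (((t n).re : ℂ)) = t n := fun n =>
      trace_herm_real (hMpos i r).1 ((hρ n).1.sub hΩherm)
    have hsumzero : ∑ n, t n = 0 := by
      rw [htdef]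
      have h1 : ∑ n, (ρ n - Ω) = 0 := by
        rw [Finset.sum_sub_distrib, Finset.sum_const, Finset.card_univ, Fintype.card_fin,
          sub_eq_zero, ← Nat.cast_smul_eq_nsmul ℂ, hΩdef, smul_smul]
        rw [mul_one_div, div_self hdC, one_smul]
      simp only [← Matrix.trace_sum, ← Finset.mul_sum, h1, Matrix.mul_zero, Matrix.trace_zero]
    have hsub : ∀ S : Finset (Fin d), S.card = k →
        (1 / (k : ℂ)) • ∑ j ∈ S, ρ j - Ω = (1 / (k : ℂ)) • ∑ j ∈ S, (ρ j - Ω) := by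
      intro S hc
      rw [Finset.sum_sub_distrib, smul_sub, Finset.sum_const, hc,
        ← Nat.cast_smul_eq_nsmul ℂ, smul_smul, one_div,
        inv_mul_cancel₀ (by exact_mod_cast hk0.ne' : (k:ℂ) ≠ 0), one_smul]
    have hhyp : ∀ S : Finset (Fin d), S.card = k → |∑ j ∈ S, (t j).re| ≤ 2 * k * ε := by
      intro S hc
      have h1 := hTherm k hk4 hk3' S hc i
      have h2 : (1/2 : ℝ) * ‖(Mop i r *
          ((1 / (k : ℂ)) • ∑ j ∈ S, ρ j - Ω)).trace‖ ≤ ε := by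
        refine le_trans ?_ h1
        unfold povmDist
        have : ∀ r' : Fin (nM i), (0:ℝ) ≤ ‖(Mop i r' *
            ((1 / (k : ℂ)) • ∑ j ∈ S, ρ j - Ω)).trace‖ := fun r' => norm_nonneg _
        gcongr
        exact Finset.single_le_sum (fun r' _ => this r') (Finset.mem_univ r)
      have h3 : (Mop i r * ((1 / (k : ℂ)) • ∑ j ∈ S, ρ j - Ω)).trace
          = (1 / (k:ℂ)) * ∑ j ∈ S, t j := by
        rw [hsub S hc, Matrix.mul_smul, Matrix.trace_smul, smul_eq_mul, Finset.mul_sum,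
          Matrix.trace_sum]
      rw [h3] at h2
      have habsk : ‖(1 / (k:ℂ)) * ∑ j ∈ S, t j‖
          = (1 / (k:ℝ)) * ‖∑ j ∈ S, t j‖ := by
        rw [norm_mul]
        congr 1
        rw [norm_div, norm_one, Complex.norm_natCast]
      rw [habsk] at h2
      have hk' : (0:ℝ) < (k:ℝ) := by exact_mod_cast hk0
      have hbound : ‖∑ j ∈ S, t j‖ ≤ 2 * k * ε := by
        have h2' := mul_le_mul_of_nonneg_left h2 (by positivity : (0:ℝ) ≤ 2 * (k:ℝ))
        calc ‖∑ j ∈ S, t j‖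
            = 2 * (k:ℝ) * (1 / 2 * (1 / (k:ℝ) * ‖∑ j ∈ S, t j‖)) := by
              field_simp
          _ ≤ 2 * (k:ℝ) * ε := h2'
          _ = 2 * k * ε := rfl
      calc |∑ j ∈ S, (t j).re| = |(∑ j ∈ S, t j).re| := by rw [Complex.re_sum]
        _ ≤ ‖∑ j ∈ S, t j‖ := Complex.abs_re_le_norm _
        _ ≤ 2 * k * ε := hbound
    have hsumre : ∑ n, (t n).re = 0 := by
      have := congrArg Complex.re hsumzero
      simpa [Complex.re_sum] using this
    have habs_eq : ∀ n, ‖t n‖ = |(t n).re| := by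
      intro n
      conv_lhs => rw [← hreal n]
      rw [Complex.norm_real, Real.norm_eq_abs]
    calc ∑ n, ‖t n‖ = ∑ n, |(t n).re| := Finset.sum_congr rfl fun n _ => habs_eq n
      _ ≤ 2 * d * ε := aux_key hk0 hk3 hε _ hsumre hhyp
  -- per measurement bound
  have per_i : ∀ i : ι, ∑ n, povmDist (Mop i) (ρ n) Ω ≤ (nM i : ℝ) * ((d:ℝ) * ε) := by
    intro i
    have heq : ∑ n, povmDist (Mop i) (ρ n) Ω
        = (1/2 : ℝ) * ∑ r : Fin (nM i), ∑ n, ‖(Mop i r * (ρ n - Ω)).trace‖ := by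
      unfold povmDist
      rw [← Finset.mul_sum, Finset.sum_comm]
    rw [heq]
    calc (1/2 : ℝ) * ∑ r : Fin (nM i), ∑ n, ‖(Mop i r * (ρ n - Ω)).trace‖
        ≤ (1/2 : ℝ) * ∑ _r : Fin (nM i), (2 * (d:ℝ) * ε) := by
          gcongr with r hr
          exact key i r
      _ = (nM i : ℝ) * ((d:ℝ) * ε) := by
          rw [Finset.sum_const, Finset.card_univ, Fintype.card_fin, nsmul_eq_mul]; ring
  have hsup : ∀ n : Fin d, (Finset.univ.sup' Finset.univ_nonempty fun i : ι =>
      povmDist (Mop i) (ρ n) Ω) ≤ ∑ i, povmDist (Mop i) (ρ n) Ω := by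
    intro n
    exact Finset.sup'_le _ _ fun i _ =>
      Finset.single_le_sum (fun i' _ => povmDist_nonneg _ _ _) (Finset.mem_univ i)
  have hd1 : (0:ℝ) ≤ 1 / (d:ℝ) := by positivity
  calc (1 / (d:ℝ)) * ∑ n, (Finset.univ.sup' Finset.univ_nonempty fun i : ι =>
        povmDist (Mop i) (ρ n) Ω)
      ≤ (1 / (d:ℝ)) * ∑ n, ∑ i, povmDist (Mop i) (ρ n) Ω := by
        gcongr with n hn
        exact hsup n
    _ = (1 / (d:ℝ)) * ∑ i, ∑ n, povmDist (Mop i) (ρ n) Ω := by rw [Finset.sum_comm]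
    _ ≤ (1 / (d:ℝ)) * ∑ i, (nM i : ℝ) * ((d:ℝ) * ε) :=
        mul_le_mul_of_nonneg_left (Finset.sum_le_sum fun i _ => per_i i) hd1
    _ = (∑ i, (nM i : ℝ)) * ε := by
        rw [← Finset.sum_mul, ← mul_assoc]
        field_simp
end

section
/- Let p_1,...,p_d be a probability distribution and D_1,...,D_d ∈ [0,1]. If √((1/d)∑_n D_n)·√(d·∑_n p_n² − 1) ≤ ε and ∑_n p_n² ≤ 4/d, then ∑_n |p_n − 1/d|·D_n ≤ √(3·(1/d)∑_n D_n) whenever (1/d)∑_n D_n ≥ 0; in particular if the effective dimension (∑ p_n²)⁻¹ ≥ d/4 then ∑_n |p_n − 1/d|·D_n ≤ √(3·D_mean) where D_mean = (1/d)∑_n D_n. -/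
/-- High-effective-dimension corollary of Theorem 1: if the effective
dimension is at least `d/4` (i.e. `∑ p_n² ≤ 4/d`), then the weighted deviation
`∑ |p_n - 1/d| · D_n` is at most `√(3 · D_mean)`. -/
theorem high_deff_thermalisation (d : ℕ) (hd : 0 < d)
    (p D : Fin d → ℝ)
    (hp : ∀ n, 0 ≤ p n) (hp1 : ∑ n, p n = 1)
    (hD0 : ∀ n, 0 ≤ D n) (hD1 : ∀ n, D n ≤ 1)
    (ε : ℝ)
    (hε : Real.sqrt ((1 / d) * ∑ n, D n) * Real.sqrt (d * (∑ n, (p n) ^ 2) - 1) ≤ ε)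
    (hdeff : ∑ n, (p n) ^ 2 ≤ 4 / d)
    (hDmean : 0 ≤ (1 / d) * ∑ n, D n) :
    ∑ n, |p n - 1 / d| * D n ≤ Real.sqrt (3 * ((1 / d) * ∑ n, D n)) := by
  have hd' : (0:ℝ) < d := by exact_mod_cast hd
  set S := ∑ n, |p n - 1 / d| * D n with hS
  have hS0 : 0 ≤ S := Finset.sum_nonneg fun n _ =>
    mul_nonneg (abs_nonneg _) (hD0 n)
  have hCS : S ^ 2 ≤ (∑ n, (p n - 1 / d) ^ 2) * (∑ n, (D n) ^ 2) := by
    have h := Finset.sum_mul_sq_le_sq_mul_sq (Finset.univ : Finset (Fin d))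
      (fun n => |p n - 1 / d|) D
    calc S ^ 2 ≤ (∑ n, |p n - 1/d| ^ 2) * (∑ n, (D n) ^ 2) := by
          simpa [hS] using h
      _ = (∑ n, (p n - 1 / d) ^ 2) * (∑ n, (D n) ^ 2) := by
          simp [sq_abs]
  have h1 : ∑ n, (p n - 1 / d) ^ 2 ≤ 3 / (d:ℝ) := by
    have hexp : ∑ n, (p n - 1 / (d:ℝ)) ^ 2 = (∑ n, (p n) ^ 2) - 1 / d := by
      have hpt : ∀ n : Fin d, (p n - 1 / (d:ℝ)) ^ 2
          = (p n) ^ 2 - 2 * (1/(d:ℝ)) * p n + (1/(d:ℝ))^2 := by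
        intro n; ring
      rw [Finset.sum_congr rfl fun n _ => hpt n]
      rw [Finset.sum_add_distrib, Finset.sum_sub_distrib, ← Finset.mul_sum, hp1,
        Finset.sum_const, Finset.card_univ, Fintype.card_fin, nsmul_eq_mul]
      field_simp
      ring
    rw [hexp]
    have h34 : (3:ℝ)/d = 4/(d:ℝ) - 1/d := by ring
    rw [h34]
    linarith
  have h2 : ∑ n, (D n) ^ 2 ≤ ∑ n, D n :=
    Finset.sum_le_sum fun n _ => by
      nlinarith [hD0 n, hD1 n]
  have hDsum : 0 ≤ ∑ n, D n := Finset.sum_nonneg fun n _ => hD0 n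
  have hsq : S ^ 2 ≤ 3 * ((1 / d) * ∑ n, D n) := by
    have hb : (∑ n, (p n - 1 / d) ^ 2) * (∑ n, (D n) ^ 2)
        ≤ (3 / d) * (∑ n, D n) := by
      apply mul_le_mul h1 h2 (Finset.sum_nonneg fun n _ => sq_nonneg _)
        (by positivity)
    calc S ^ 2 ≤ _ := hCS
      _ ≤ (3 / d) * (∑ n, D n) := hb
      _ = 3 * ((1 / d) * ∑ n, D n) := by ring
  have := Real.sqrt_le_sqrt hsq
  calc S = Real.sqrt (S ^ 2) := by rw [Real.sqrt_sq hS0]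
    _ ≤ Real.sqrt (3 * ((1 / d) * ∑ n, D n)) := Real.sqrt_le_sqrt hsq
end
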